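/- arXiv:1006.5100 — 2 statements merged into one kernel-verified Lean document; each statement's English description precedes it below -/
import Mathlib

section
/- For arbitrary processes s and t of a probabilistic transition system over a finite action set 𝒜, s is NOT testing equivalent to t (s ≉_T t) if and only if there exists a test T without probabilistic transitions such that R(s,T) ≠ R(t,T). In other words, deterministic (non-probabilistic) tests suffice to distinguish non-equivalent processes. -/
/-! # Reactive probabilistic processes and testing (preamble)

Finite process graphs of a probabilistic transition system (PTS) over a finite
action set `A` are modelled by the inductive type `Proc A`: a process is either
an *action state* (a list of action-labelled successors) or a *probabilistic
state* (a list of probability-weighted successors).  Well-formedness (`WF`)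
requires action transitions to be deterministic per action and, at
probabilistic states, the weights to lie in `(0,1]`, sum to `1`, and lead to
action states.  Tests are processes over `Option A`, where the label `none`
plays the role of the success action `ω`.  The result `Res s T` of testing is a
rational function, an element of the field `RF A` of rational functions in
variables `A` over `ℝ`. -/

/-- Rational functions with variables in `A` over `ℝ` (the set `𝓡`). -/
abbrev RF (A : Type) := FractionRing (MvPolynomial A ℝ)

/-- The scalar `r` as a rational function. -/
noncomputable def Cr {A : Type} (r : ℝ) : RF A :=
  algebraMap (MvPolynomial A ℝ) (RF A) (MvPolynomial.C r)

/-- The variable `a` as a rational function. -/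
noncomputable def Xv {A : Type} (a : A) : RF A :=
  algebraMap (MvPolynomial A ℝ) (RF A) (MvPolynomial.X a)

/-- Process graphs over the action set `A`. -/
inductive Proc (A : Type) : Type
  | act  : List (A × Proc A) → Proc A
  | prob : List (ℝ × Proc A) → Proc A

namespace Proc

variable {A : Type}

/-- The menu `I(s)`: the set of actions enabled at an action state. -/
def menu [DecidableEq A] : Proc A → Finset A
  | act l => (l.map Prod.fst).toFinset
  | prob _ => ∅

/-- Well-formedness of a process graph of a PTS. -/
inductive WF : Proc A → Prop
  | act {l : List (A × Proc A)} :
      (∀ p ∈ l, ∀ q ∈ l, p.1 = q.1 → p.2 = q.2) →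
      (∀ p ∈ l, WF p.2) →
      WF (Proc.act l)
  | prob {l : List (ℝ × Proc A)} :
      (l.map Prod.fst).sum = 1 →
      (∀ p ∈ l, 0 < p.1) →
      (∀ p ∈ l, p.1 ≤ 1) →
      (∀ p ∈ l, ∃ l', p.2 = Proc.act l') →
      (∀ p ∈ l, WF p.2) →
      WF (Proc.prob l)

/-- A process with no probabilistic states (a deterministic process). -/
inductive NoProb : Proc A → Prop
  | act {l : List (A × Proc A)} :
      (∀ p ∈ l, NoProb p.2) → NoProb (Proc.act l)

/-- First-level menu probability `P_s^1(M)`. -/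
def P1 [DecidableEq A] (M : Finset A) : Proc A → ℝ
  | act l => if (l.map Prod.fst).toFinset = M then 1 else 0
  | prob l => (l.attach.map fun x => x.1.1 * P1 M x.1.2).sum
decreasing_by
  rcases x with ⟨⟨r, s⟩, hx⟩
  have h := List.sizeOf_lt_of_mem hx
  simp only [Prod.mk.sizeOf_spec, Proc.prob.sizeOf_spec] at h ⊢
  omega

/-- The `a`-successor of a state, if any. -/
def getSucc [DecidableEq A] (a : A) : Proc A → Option (Proc A)
  | act l => (l.find? fun p => decide (p.1 = a)).map Prod.snd
  | prob _ => none

/-- The `a`-successor of a state, defaulting to the deadlocked state. -/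
def succD [DecidableEq A] (a : A) (s : Proc A) : Proc A :=
  (getSucc a s).getD (Proc.act [])

lemma sizeOf_succD_lt {B : Type} [SizeOf B] [DecidableEq B] {a : B} {l : List (B × Proc B)}
    (h : a ∈ menu (Proc.act l)) :
    sizeOf (succD a (Proc.act l)) < sizeOf (Proc.act l) := by
  rw [menu, List.mem_toFinset, List.mem_map] at h
  obtain ⟨p, hp, rfl⟩ := h
  have hsome : (l.find? fun q => decide (q.1 = p.1)).isSome := by
    rw [List.find?_isSome]
    exact ⟨p, hp, by simp⟩
  obtain ⟨q, hq⟩ := Option.isSome_iff_exists.mp hsome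
  have hmem := List.mem_of_find?_eq_some hq
  have h1 := List.sizeOf_lt_of_mem hmem
  simp only [succD, getSucc, hq, Option.map_some, Option.getD_some]
  rcases q with ⟨b, t⟩
  simp only [Prod.mk.sizeOf_spec, Proc.act.sizeOf_spec] at h1 ⊢
  omega

/-- The process `s_{(M,a)}` obtained from `s` given that the menu `M` was
offered and the action `a ∈ M` was performed (Definition 3 of the paper). -/
noncomputable def pafter [DecidableEq A] (M : Finset A) (a : A) : Proc A → Proc A
  | act l => succD a (act l)
  | prob l =>
      let l₁ := l.filter fun x => decide (menu x.2 = M)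
      let π : ℝ := (l₁.map Prod.fst).sum
      prob (l₁.flatMap fun x =>
        match getSucc a x.2 with
        | none => []
        | some (Proc.prob l'') => l''.map fun y => (x.1 * y.1 / π, y.2)
        | some s' => [(x.1 / π, s')])

/-- The conditional ready-trace probability
`P_s^{n+1}(M | M₁,a₁,…,Mₙ,aₙ)`, as a partial (option-valued) function;
`none` means "undefined". -/
noncomputable def Pcond [DecidableEq A] : Proc A → List (Finset A × A) → Finset A → Option ℝ
  | s, [], M => some (P1 M s)
  | s, (M₁, a₁) :: rest, M =>
      if 0 < P1 M₁ s then Pcond (pafter M₁ a₁ s) rest M else none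

/-- Probabilistic ready-trace equivalence `≈_O`: all conditional ready-trace
probabilities are defined at the same time and agree whenever defined. -/
def RTEquiv [DecidableEq A] (s t : Proc A) : Prop :=
  ∀ (tr : List (Finset A × A)) (M : Finset A), Pcond s tr M = Pcond t tr M

/-- Does the test enable the success action `ω` (encoded by `none`)? -/
def enablesOmega : Proc (Option A) → Bool
  | Proc.act l => l.any fun p => p.1.isNone
  | Proc.prob _ => false

/-- The set `K = I(s) ∩ I(T)` of actions on which process and test can
synchronize. -/
def sync [DecidableEq A] (s : Proc A) (T : Proc (Option A)) : Finset A :=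
  (menu s).filter fun a => some a ∈ menu T

/-- The result `R(s,T) ∈ 𝓡` of testing process `s` with test `T`
(Definition 6 of the paper). -/
noncomputable def Res [DecidableEq A] : Proc A → Proc (Option A) → RF A
  | Proc.prob ls, T =>
      if enablesOmega T then 1
      else (ls.attach.map fun x => Cr x.1.1 * Res x.1.2 T).sum
  | Proc.act ls, Proc.prob lt =>
      (lt.attach.map fun x => Cr x.1.1 * Res (Proc.act ls) x.1.2).sum
  | Proc.act ls, Proc.act lt =>
      if enablesOmega (Proc.act lt) then 1
      else
        ∑ a ∈ (sync (Proc.act ls) (Proc.act lt)).attach,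
          (Xv a.1 / ∑ b ∈ sync (Proc.act ls) (Proc.act lt), Xv b) *
            Res (succD a.1 (Proc.act ls)) (succD (some a.1) (Proc.act lt))
termination_by s T => sizeOf s + sizeOf T
decreasing_by
  · rcases x with ⟨⟨r, s⟩, hx⟩
    have h := List.sizeOf_lt_of_mem hx
    simp only [Prod.mk.sizeOf_spec, Proc.prob.sizeOf_spec] at h ⊢
    omega
  · rcases x with ⟨⟨r, s⟩, hx⟩
    have h := List.sizeOf_lt_of_mem hx
    simp only [Prod.mk.sizeOf_spec, Proc.prob.sizeOf_spec] at h ⊢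
    omega
  · have h1 : a.1 ∈ menu (Proc.act ls) := (Finset.mem_filter.mp a.2).1
    have h2 : (some a.1 : Option A) ∈ menu (Proc.act lt) :=
      (Finset.mem_filter.mp a.2).2
    exact Nat.add_lt_add (sizeOf_succD_lt h1) (sizeOf_succD_lt h2)

/-- Testing equivalence `≈_T`: same testing result for every test. -/
def TestEquiv [DecidableEq A] (s t : Proc A) : Prop :=
  ∀ T : Proc (Option A), WF T → Res s T = Res t T

end Proc

namespace Proc

universe u

/-! ### Generic list helpers -/

lemma list_sum_add {α : Type u} {M : Type} [AddCommMonoid M] (l : List α) (f g : α → M) :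
    (l.map fun x => f x + g x).sum = (l.map f).sum + (l.map g).sum := by
  induction l with
  | nil => simp
  | cons a l ih =>
    simp only [List.map_cons, List.sum_cons, ih]
    abel

lemma list_sum_comm {α β M : Type} [AddCommMonoid M] (l1 : List α) (l2 : List β)
    (f : α → β → M) :
    (l1.map fun x => (l2.map (f x)).sum).sum
      = (l2.map fun y => (l1.map fun x => f x y).sum).sum := by
  induction l1 with
  | nil => simp
  | cons a l ih =>
    simp only [List.map_cons, List.sum_cons, ih]
    rw [← list_sum_add]

lemma list_finset_comm {α ι M : Type} [AddCommMonoid M] (L : List α) (F : Finset ι)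
    (f : α → ι → M) :
    (L.map fun y => ∑ a ∈ F, f y a).sum = ∑ a ∈ F, (L.map fun y => f y a).sum := by
  induction L with
  | nil => simp
  | cons p L ih => simp [ih, Finset.sum_add_distrib]

end Proc
namespace Proc

variable {B : Type}

lemma sizeOf_snd_lt_act [SizeOf B] {p : B × Proc B} {l : List (B × Proc B)} (hp : p ∈ l) :
    sizeOf p.2 < sizeOf (Proc.act l) := by
  have h := List.sizeOf_lt_of_mem hp
  rcases p with ⟨b, s⟩
  simp only [Prod.mk.sizeOf_spec, Proc.act.sizeOf_spec] at h ⊢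
  omega

lemma sizeOf_snd_lt_prob [SizeOf B] {p : ℝ × Proc B} {l : List (ℝ × Proc B)} (hp : p ∈ l) :
    sizeOf p.2 < sizeOf (Proc.prob l) := by
  have h := List.sizeOf_lt_of_mem hp
  rcases p with ⟨b, s⟩
  simp only [Prod.mk.sizeOf_spec, Proc.prob.sizeOf_spec] at h ⊢
  omega

/-! ### Key-deduplication of association lists -/

def kd {K β : Type} [DecidableEq K] : List (K × β) → List (K × β)
  | [] => []
  | p :: l => p :: kd (l.filter fun q => q.1 ≠ p.1)
termination_by l => l.length
decreasing_by
  simp only [List.length_cons]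
  exact Nat.lt_succ_of_le (by simpa using List.length_filter_le _ l.attach)

lemma kd_unattach {K β : Type} [DecidableEq K] (p : K × β) (l : List (K × β)) :
    (List.filter (fun x : {x // x ∈ l} => decide (x.1.1 ≠ p.1)) l.attach).unattach
      = l.filter fun q => decide (q.1 ≠ p.1) := by
  rw [List.unattach_filter (f := fun x : {x // x ∈ l} => decide (x.1.1 ≠ p.1))
    (g := fun q => decide (q.1 ≠ p.1)) (hf := fun _ _ => rfl), List.unattach_attach]

lemma kd_subset {K β : Type} [DecidableEq K] : ∀ (l : List (K × β)), ∀ q ∈ kd l, q ∈ l := by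
  intro l
  induction l using kd.induct with
  | case1 => intro q hq; simp [kd] at hq
  | case2 p l ih =>
    rw [kd_unattach] at ih
    intro q hq
    rw [kd] at hq
    rcases List.mem_cons.mp hq with h | h
    · simp [h]
    · exact List.mem_cons_of_mem p (List.mem_of_mem_filter (ih q h))

lemma find?_filter_of {α : Type} (l : List α) (p q : α → Bool) (h : ∀ x, p x = true → q x = true) :
    (l.filter q).find? p = l.find? p := by
  induction l with
  | nil => rfl
  | cons x l ih =>
    by_cases hx : p x = true
    · rw [List.filter_cons, if_pos (h x hx), List.find?_cons_of_pos hx,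
        List.find?_cons_of_pos hx]
    · by_cases hq : q x = true
      · rw [List.filter_cons, if_pos hq, List.find?_cons_of_neg hx,
          List.find?_cons_of_neg hx, ih]
      · rw [List.filter_cons, if_neg hq, List.find?_cons_of_neg hx, ih]

lemma kd_find {K β : Type} [DecidableEq K] (a : K) :
    ∀ (l : List (K × β)), (kd l).find? (fun q => q.1 = a) = l.find? (fun q => q.1 = a) := by
  intro l
  induction l using kd.induct with
  | case1 => rw [kd]
  | case2 p l ih =>
    rw [kd_unattach] at ih
    rw [kd]
    by_cases hp : (p.1 = a)
    · rw [List.find?_cons_of_pos (by simpa using hp), List.find?_cons_of_pos (by simpa using hp)]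
    · rw [List.find?_cons_of_neg (by simpa using hp), List.find?_cons_of_neg (by simpa using hp),
        ih, find?_filter_of]
      intro x hx
      simp only [decide_eq_true_eq] at hx
      simp [hx, hp]
      intro h; exact hp (h ▸ rfl)

lemma kd_keys_nodup {K β : Type} [DecidableEq K] :
    ∀ (l : List (K × β)), ((kd l).map Prod.fst).Nodup := by
  intro l
  induction l using kd.induct with
  | case1 => simp [kd]
  | case2 p l ih =>
    rw [kd_unattach] at ih
    rw [kd, List.map_cons, List.nodup_cons]
    refine ⟨?_, ih⟩
    intro hmem
    rcases List.mem_map.mp hmem with ⟨q, hq, hq1⟩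
    have := List.of_mem_filter (kd_subset _ q hq)
    simp only [ne_eq, decide_not, Bool.not_eq_true', decide_eq_false_iff_not] at this
    exact this hq1

lemma kd_keys_mem {K β : Type} [DecidableEq K] (a : K) :
    ∀ (l : List (K × β)), a ∈ (kd l).map Prod.fst ↔ a ∈ l.map Prod.fst := by
  intro l
  induction l using kd.induct with
  | case1 => simp [kd]
  | case2 p l ih =>
    rw [kd_unattach] at ih
    rw [kd]
    simp only [List.map_cons, List.mem_cons]
    constructor
    · rintro (h | h)
      · exact Or.inl h
      · rcases List.mem_map.mp h with ⟨q, hq, hq1⟩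
        exact Or.inr (hq1 ▸ List.mem_map_of_mem (List.mem_of_mem_filter (kd_subset _ q hq)))
    · rintro (h | h)
      · exact Or.inl h
      · by_cases hpa : a = p.1
        · exact Or.inl hpa
        · refine Or.inr (ih.mpr ?_)
          rcases List.mem_map.mp h with ⟨q, hq, hq1⟩
          refine hq1 ▸ List.mem_map_of_mem (List.mem_filter.mpr ⟨hq, ?_⟩)
          simp [hq1 ▸ hpa]

lemma eq_of_nodup_keys {K β : Type} {l : List (K × β)} (h : (l.map Prod.fst).Nodup) :
    ∀ p ∈ l, ∀ q ∈ l, p.1 = q.1 → p.2 = q.2 := by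
  induction l with
  | nil => intro p hp; simp at hp
  | cons x l ih =>
    rw [List.map_cons, List.nodup_cons] at h
    intro p hp q hq hpq
    rcases List.mem_cons.mp hp with rfl | hp' <;> rcases List.mem_cons.mp hq with rfl | hq'
    · rfl
    · exact absurd (hpq ▸ List.mem_map_of_mem (f := Prod.fst) hq') h.1
    · exact absurd (hpq ▸ List.mem_map_of_mem (f := Prod.fst) hp') h.1
    · exact ih h.2 p hp' q hq' hpq

/-! ### Tidy processes, probabilistic-state count, normalization -/

/-- All action lists have pairwise distinct keys. -/
inductive Tidy : Proc B → Prop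
  | act {l : List (B × Proc B)} :
      (l.map Prod.fst).Nodup → (∀ p ∈ l, Tidy p.2) → Tidy (Proc.act l)
  | prob {l : List (ℝ × Proc B)} :
      (∀ p ∈ l, Tidy p.2) → Tidy (Proc.prob l)

/-- Number of probabilistic states in a process tree. -/
def probCount : Proc B → ℕ
  | Proc.act l => (l.attach.map fun x => probCount x.1.2).sum
  | Proc.prob l => (l.attach.map fun x => probCount x.1.2).sum + 1
decreasing_by
  · exact sizeOf_snd_lt_act x.2
  · exact sizeOf_snd_lt_prob x.2

lemma probCount_act (l : List (B × Proc B)) :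
    probCount (Proc.act l) = (l.map fun p => probCount p.2).sum := by
  rw [probCount]
  exact congrArg List.sum (List.attach_map_val (l := l) (f := fun p => probCount p.2))

lemma probCount_prob (l : List (ℝ × Proc B)) :
    probCount (Proc.prob l) = (l.map fun p => probCount p.2).sum + 1 := by
  rw [probCount]
  exact congrArg (· + 1) (congrArg List.sum (List.attach_map_val (l := l) (f := fun p => probCount p.2)))

lemma noProb_of_probCount_eq_zero : ∀ (T : Proc B), probCount T = 0 → NoProb T := by
  intro T
  induction T using probCount.induct with
  | case1 l ih =>
    intro h
    rw [probCount_act] at h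
    refine NoProb.act fun p hp => ?_
    have h0 : probCount p.2 = 0 := by
      have := List.sum_eq_zero_iff.mp h _ (List.mem_map_of_mem hp)
      simpa using this
    exact ih ⟨p, hp⟩ h0
  | case2 l ih =>
    intro h
    rw [probCount_prob] at h
    omega

/-- Normalization: recursively dedup the keys of action lists. -/
def norm [DecidableEq B] : Proc B → Proc B
  | Proc.act l => Proc.act ((kd l).attach.map fun p => (p.1.1, norm p.1.2))
  | Proc.prob l => Proc.prob (l.attach.map fun p => (p.1.1, norm p.1.2))
decreasing_by
  · exact sizeOf_snd_lt_act (kd_subset _ _ p.2)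
  · exact sizeOf_snd_lt_prob p.2

lemma norm_act [DecidableEq B] (l : List (B × Proc B)) :
    norm (Proc.act l) = Proc.act ((kd l).map fun p => (p.1, norm p.2)) := by
  rw [norm]
  exact congrArg Proc.act (List.attach_map_val (l := (kd l)) (f := fun p => (p.1, norm p.2)))

lemma norm_prob [DecidableEq B] (l : List (ℝ × Proc B)) :
    norm (Proc.prob l) = Proc.prob (l.map fun p => (p.1, norm p.2)) := by
  rw [norm]
  exact congrArg Proc.prob (List.attach_map_val (l := l) (f := fun p => (p.1, norm p.2)))

end Proc
namespace Proc

lemma Cr_one {A : Type} : (Cr 1 : RF A) = 1 := by simp [Cr]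

lemma Cr_add {A : Type} (a b : ℝ) : (Cr (a + b) : RF A) = Cr a + Cr b := by
  simp [Cr, map_add]

lemma any_map' {α β : Type} (l : List α) (f : α → β) (p : β → Bool) :
    (l.map f).any p = l.any fun x => p (f x) := by
  induction l <;> simp [*]

lemma Cr_sum_mul {A β : Type} (l : List (ℝ × β)) (c : RF A) :
    (l.map fun p => Cr p.1 * c).sum = Cr ((l.map Prod.fst).sum) * c := by
  induction l with
  | nil => simp [Cr]
  | cons p l ih =>
    simp only [List.map_cons, List.sum_cons, ih, Cr_add, add_mul]

lemma enablesOmega_keys {A : Type} (l : List (Option A × Proc (Option A))) :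
    enablesOmega (Proc.act l) = (l.map Prod.fst).any Option.isNone := by
  rw [any_map' l Prod.fst Option.isNone]
  rfl

variable {A : Type} [DecidableEq A]

lemma ResOmega (s : Proc A) (T : Proc (Option A)) (h : enablesOmega T = true) : Res s T = 1 := by
  cases s with
  | prob ls => rw [Res.eq_1, if_pos h]
  | act ls =>
    cases T with
    | act lt => rw [Res.eq_3, if_pos h]
    | prob lt => simp [enablesOmega] at h

lemma Res_prob_sum (ls : List (ℝ × Proc A)) (h1 : (ls.map Prod.fst).sum = 1)
    (T : Proc (Option A)) :
    Res (Proc.prob ls) T = (ls.map fun x => Cr x.1 * Res x.2 T).sum := by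
  by_cases h : enablesOmega T = true
  · rw [ResOmega _ _ h]
    have h2 : (ls.map fun x => Cr x.1 * Res x.2 T) = ls.map fun x => Cr x.1 * 1 :=
      List.map_congr_left fun x _ => by rw [ResOmega _ _ h]
    rw [h2, Cr_sum_mul, h1, Cr_one, one_mul]
  · rw [Res.eq_1, if_neg h]
    exact congrArg List.sum (List.attach_map_val (l := ls) (f := fun x => Cr x.1 * Res x.2 T))

lemma Res_act_prob (ls : List (A × Proc A)) (lt : List (ℝ × Proc (Option A))) :
    Res (Proc.act ls) (Proc.prob lt)
      = (lt.map fun x => Cr x.1 * Res (Proc.act ls) x.2).sum := by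
  rw [Res.eq_2]
  exact congrArg List.sum (List.attach_map_val (l := lt) (f := fun x => Cr x.1 * Res (Proc.act ls) x.2))

/-- Lemma A: the result of a probabilistic test is the convex combination of the
results of its branches. -/
lemma Res_T_prob {s : Proc A} (hs : WF s) (lt : List (ℝ × Proc (Option A))) :
    Res s (Proc.prob lt) = (lt.map fun y => Cr y.1 * Res s y.2).sum := by
  cases s with
  | act ls => exact Res_act_prob ls lt
  | prob ls =>
    cases hs with
    | prob h1 hpos hle hact hwf =>
      rw [Res_prob_sum ls h1]
      have hstep : (ls.map fun x => Cr x.1 * Res x.2 (Proc.prob lt))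
          = ls.map fun x => (lt.map fun y => Cr x.1 * (Cr y.1 * Res x.2 y.2)).sum := by
        refine List.map_congr_left fun x hx => ?_
        obtain ⟨l', hl'⟩ := hact x hx
        rw [hl', Res_act_prob]
        exact (List.sum_map_mul_left lt (fun y => Cr y.1 * Res (Proc.act l') y.2) (Cr x.1)).symm
      rw [hstep, list_sum_comm ls lt (fun x y => Cr x.1 * (Cr y.1 * Res x.2 y.2))]
      refine congrArg List.sum (List.map_congr_left fun y _ => ?_)
      have h3 : (ls.map fun x => Cr x.1 * (Cr y.1 * Res x.2 y.2))
          = ls.map fun x => Cr y.1 * (Cr x.1 * Res x.2 y.2) :=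
        List.map_congr_left fun x _ => by ring
      rw [h3, List.sum_map_mul_left, ← Res_prob_sum ls h1]

lemma WF_succD {B : Type} [DecidableEq B] {s : Proc B} (hs : WF s) (a : B) :
    WF (succD a s) := by
  have hnil : WF (Proc.act ([] : List (B × Proc B))) := WF.act (by simp) (by simp)
  cases s with
  | prob l => exact hnil
  | act l =>
    rw [succD, getSucc]
    cases h : l.find? (fun p => decide (p.1 = a)) with
    | none => simpa using hnil
    | some q =>
      simp only [Option.map_some, Option.getD_some]
      cases hs with
      | act hdet hwf => exact hwf q (List.mem_of_find?_eq_some h)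

end Proc
namespace Proc

lemma sizeOf_pos {B : Type} [SizeOf B] (T : Proc B) : 0 < sizeOf T := by
  cases T with
  | act l => simp only [Proc.act.sizeOf_spec]; omega
  | prob l => simp only [Proc.prob.sizeOf_spec]; omega

lemma keys_norm_act {B : Type} [DecidableEq B] (l : List (B × Proc B)) :
    (((kd l).map fun p => (p.1, norm p.2)).map Prod.fst) = (kd l).map Prod.fst := by
  rw [List.map_map]
  rfl

lemma menu_norm {B : Type} [DecidableEq B] (T : Proc B) : menu (norm T) = menu T := by
  cases T with
  | prob l => rw [norm_prob]; rfl
  | act l =>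
    rw [norm_act]
    show (((kd l).map fun p => (p.1, norm p.2)).map Prod.fst).toFinset = (l.map Prod.fst).toFinset
    rw [keys_norm_act]
    ext a
    simp only [List.mem_toFinset]
    exact kd_keys_mem a l

lemma enablesOmega_norm {A : Type} [DecidableEq A] (T : Proc (Option A)) :
    enablesOmega (norm T) = enablesOmega T := by
  cases T with
  | prob l => rw [norm_prob]; rfl
  | act l =>
    rw [norm_act, enablesOmega_keys, enablesOmega_keys, keys_norm_act]
    rw [Bool.eq_iff_iff]
    simp only [List.any_eq_true]
    constructor
    · rintro ⟨x, hx, h⟩; exact ⟨x, (kd_keys_mem x l).mp hx, h⟩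
    · rintro ⟨x, hx, h⟩; exact ⟨x, (kd_keys_mem x l).mpr hx, h⟩

lemma norm_nil {B : Type} [DecidableEq B] :
    norm (Proc.act ([] : List (B × Proc B))) = Proc.act [] := by
  rw [norm_act, kd]
  rfl

lemma getSucc_norm {B : Type} [DecidableEq B] (b : B) (l : List (B × Proc B)) :
    getSucc b (norm (Proc.act l)) = (getSucc b (Proc.act l)).map norm := by
  rw [norm_act]
  show ((((kd l).map fun p => (p.1, norm p.2)).find? fun p => p.1 = b).map Prod.snd)
      = (((l.find? fun p => p.1 = b).map Prod.snd)).map norm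
  rw [List.find?_map]
  have h1 : ((fun (p : B × Proc B) => decide (p.1 = b)) ∘ (fun p => (p.1, norm p.2)))
      = fun (q : B × Proc B) => decide (q.1 = b) := rfl
  rw [h1, kd_find]
  cases l.find? fun p => decide (p.1 = b) <;> rfl

lemma succD_norm {B : Type} [DecidableEq B] (b : B) (l : List (B × Proc B)) :
    succD b (norm (Proc.act l)) = norm (succD b (Proc.act l)) := by
  simp only [succD]
  rw [getSucc_norm b l]
  generalize getSucc b (Proc.act l) = o
  cases o with
  | none => simpa using (norm_nil (B := B)).symm
  | some u => rfl

lemma norm_wf_tidy {B : Type} [SizeOf B] [DecidableEq B] :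
    ∀ (n : ℕ) (T : Proc B), sizeOf T ≤ n → WF T → WF (norm T) ∧ Tidy (norm T) := by
  intro n
  induction n with
  | zero => intro T hT; exact absurd hT (by have := sizeOf_pos T; omega)
  | succ n ih =>
    intro T hT hW
    cases T with
    | act l =>
      rw [norm_act]
      cases hW with
      | act hdet hwf =>
        have hkeys := keys_norm_act l
        have hnod : ((((kd l).map fun p => (p.1, norm p.2)).map Prod.fst)).Nodup := by
          rw [hkeys]; exact kd_keys_nodup l
        have hchild : ∀ q ∈ (kd l).map fun p => (p.1, norm p.2), WF q.2 ∧ Tidy q.2 := by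
          rintro q hq
          rcases List.mem_map.mp hq with ⟨p, hp, rfl⟩
          have hpl : p ∈ l := kd_subset l p hp
          have hsz : sizeOf p.2 ≤ n := by
            have := sizeOf_snd_lt_act (l := l) hpl
            omega
          exact ih p.2 hsz (hwf p hpl)
        exact ⟨WF.act (eq_of_nodup_keys hnod) (fun q hq => (hchild q hq).1),
               Tidy.act hnod (fun q hq => (hchild q hq).2)⟩
    | prob l =>
      rw [norm_prob]
      cases hW with
      | prob h1 hpos hle hact hwf =>
        have hkeys : ((l.map fun p => (p.1, norm p.2)).map Prod.fst) = l.map Prod.fst := by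
          rw [List.map_map]; rfl
        have hchild : ∀ q ∈ l.map fun p => (p.1, norm p.2),
            (0 : ℝ) < q.1 ∧ q.1 ≤ 1 ∧ (∃ l', q.2 = Proc.act l') ∧ WF q.2 ∧ Tidy q.2 := by
          rintro q hq
          rcases List.mem_map.mp hq with ⟨p, hp, rfl⟩
          have hsz : sizeOf p.2 ≤ n := by
            have := sizeOf_snd_lt_prob (l := l) hp
            omega
          obtain ⟨l', hl'⟩ := hact p hp
          refine ⟨hpos p hp, hle p hp, ⟨_, by rw [hl', norm_act]⟩, ih p.2 hsz (hwf p hp)⟩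
        exact ⟨WF.prob (by rw [hkeys]; exact h1) (fun q hq => (hchild q hq).1)
                (fun q hq => (hchild q hq).2.1) (fun q hq => (hchild q hq).2.2.1)
                (fun q hq => (hchild q hq).2.2.2.1),
               Tidy.prob (fun q hq => (hchild q hq).2.2.2.2)⟩

variable {A : Type} [DecidableEq A]

lemma Res_norm : ∀ (n : ℕ) (s : Proc A) (T : Proc (Option A)),
    sizeOf s + sizeOf T ≤ n → Res s (norm T) = Res s T := by
  intro n
  induction n with
  | zero =>
    intro s T h
    exact absurd h (by have := sizeOf_pos s; have := sizeOf_pos T; omega)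
  | succ n ih =>
    intro s T hn
    cases s with
    | prob ls =>
      rw [Res.eq_1, Res.eq_1, enablesOmega_norm]
      by_cases h : enablesOmega T = true
      · rw [if_pos h, if_pos h]
      · rw [if_neg h, if_neg h]
        refine congrArg List.sum (List.map_congr_left fun x _ => ?_)
        have hsz : sizeOf x.1.2 + sizeOf T ≤ n := by
          have := sizeOf_snd_lt_prob (l := ls) x.2
          omega
        rw [ih x.1.2 T hsz]
    | act ls =>
      cases T with
      | prob lt =>
        rw [norm_prob, Res_act_prob, Res_act_prob, List.map_map]
        refine congrArg List.sum (List.map_congr_left fun p hp => ?_)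
        show Cr p.1 * Res (Proc.act ls) (norm p.2) = Cr p.1 * Res (Proc.act ls) p.2
        have hsz : sizeOf (Proc.act ls) + sizeOf p.2 ≤ n := by
          have := sizeOf_snd_lt_prob (l := lt) hp
          omega
        rw [ih (Proc.act ls) p.2 hsz]
      | act lt =>
        have hN := norm_act lt
        have hsync : sync (Proc.act ls) (norm (Proc.act lt)) = sync (Proc.act ls) (Proc.act lt) := by
          rw [sync, sync, menu_norm]
        have hOm := enablesOmega_norm (Proc.act lt)
        rw [hN] at hsync hOm
        rw [hN, Res.eq_3, Res.eq_3, hOm, hsync]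
        by_cases h : enablesOmega (Proc.act lt) = true
        · rw [if_pos h, if_pos h]
        · rw [if_neg h, if_neg h]
          refine Finset.sum_congr rfl fun a ha => ?_
          have hsd := succD_norm (some a.1) lt
          rw [hN] at hsd
          rw [hsd]
          have ha1 : a.1 ∈ menu (Proc.act ls) :=
            (Finset.mem_filter.mp a.2).1
          have ha2 : (some a.1 : Option A) ∈ menu (Proc.act lt) :=
            (Finset.mem_filter.mp a.2).2
          have hsz : sizeOf (succD a.1 (Proc.act ls)) + sizeOf (succD (some a.1) (Proc.act lt)) ≤ n := by
            have h1 := sizeOf_succD_lt ha1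
            have h2 := sizeOf_succD_lt ha2
            omega
          rw [ih _ _ hsz]

end Proc
namespace Proc

lemma keys_replace {K β : Type} (l₁ l₂ : List (K × β)) (c : K) (x : β) :
    ((l₁ ++ (c, x) :: l₂).map Prod.fst) = l₁.map Prod.fst ++ c :: l₂.map Prod.fst := by
  simp

variable {A : Type} [DecidableEq A]

lemma omega_replace (l₁ l₂ : List (Option A × Proc (Option A))) (c : Option A)
    (x y : Proc (Option A)) :
    enablesOmega (Proc.act (l₁ ++ (c, x) :: l₂)) = enablesOmega (Proc.act (l₁ ++ (c, y) :: l₂)) := by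
  rw [enablesOmega_keys, enablesOmega_keys, keys_replace, keys_replace]

lemma menu_replace {K : Type} [DecidableEq K] (l₁ l₂ : List (K × Proc K)) (c : K)
    (x y : Proc K) :
    menu (Proc.act (l₁ ++ (c, x) :: l₂)) = menu (Proc.act (l₁ ++ (c, y) :: l₂)) := by
  show ((l₁ ++ (c, x) :: l₂).map Prod.fst).toFinset = ((l₁ ++ (c, y) :: l₂).map Prod.fst).toFinset
  rw [keys_replace, keys_replace]

lemma find?_key_replace_ne {K β : Type} [DecidableEq K] {b c : K} (h : ¬ (c = b))
    (l₁ l₂ : List (K × β)) (x y : β) :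
    ((l₁ ++ (c, x) :: l₂).find? fun p => p.1 = b)
      = ((l₁ ++ (c, y) :: l₂).find? fun p => p.1 = b) := by
  rw [List.find?_append, List.find?_append,
    List.find?_cons_of_neg (by simpa using h), List.find?_cons_of_neg (by simpa using h)]

lemma find?_key_replace_eq {K β : Type} [DecidableEq K] {c : K} {l₁ : List (K × β)}
    (hc : c ∉ l₁.map Prod.fst) (l₂ : List (K × β)) (x : β) :
    ((l₁ ++ (c, x) :: l₂).find? fun p => p.1 = c) = some (c, x) := by
  rw [List.find?_append]
  have h1 : l₁.find? (fun p => decide (p.1 = c)) = none := by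
    rw [List.find?_eq_none]
    intro p hp hpc
    simp only [decide_eq_true_eq] at hpc
    exact hc (hpc ▸ List.mem_map_of_mem (f := Prod.fst) hp)
  rw [h1, List.find?_cons_of_pos (by simp)]
  rfl

lemma succD_replace_ne {b c : Option A} (h : ¬ (c = b)) (l₁ l₂ : List (Option A × Proc (Option A)))
    (x y : Proc (Option A)) :
    succD b (Proc.act (l₁ ++ (c, x) :: l₂)) = succD b (Proc.act (l₁ ++ (c, y) :: l₂)) := by
  simp only [succD, getSucc]
  rw [find?_key_replace_ne h l₁ l₂ x y]

lemma succD_replace_eq {c : Option A} {l₁ : List (Option A × Proc (Option A))}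
    (hc : c ∉ l₁.map Prod.fst) (l₂ : List (Option A × Proc (Option A))) (x : Proc (Option A)) :
    succD c (Proc.act (l₁ ++ (c, x) :: l₂)) = x := by
  simp only [succD, getSucc]
  rw [find?_key_replace_eq hc l₂ x]
  rfl

lemma Res_replace_act (l₁ l₂ : List (Option A × Proc (Option A))) (c : Option A)
    (U : Proc (Option A))
    (hnod : ((l₁ ++ (c, U) :: l₂).map Prod.fst).Nodup)
    (L : List (ℝ × Proc (Option A)))
    (hsum : (L.map Prod.fst).sum = 1)
    (hU : ∀ u : Proc A, WF u → Res u U = (L.map fun y => Cr y.1 * Res u y.2).sum)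
    (ms : List (A × Proc A)) (hms : WF (Proc.act ms)) :
    Res (Proc.act ms) (Proc.act (l₁ ++ (c, U) :: l₂))
      = (L.map fun y => Cr y.1 * Res (Proc.act ms) (Proc.act (l₁ ++ (c, y.2) :: l₂))).sum := by
  have hcl₁ : c ∉ l₁.map Prod.fst := by
    rw [keys_replace] at hnod
    have hd := (List.nodup_append.mp hnod).2.2
    intro hmem
    exact hd c hmem c List.mem_cons_self rfl
  have homega : ∀ x : Proc (Option A),
      enablesOmega (Proc.act (l₁ ++ (c, x) :: l₂)) = enablesOmega (Proc.act (l₁ ++ (c, U) :: l₂)) :=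
    fun x => omega_replace l₁ l₂ c x U
  have hsync : ∀ x : Proc (Option A),
      sync (Proc.act ms) (Proc.act (l₁ ++ (c, x) :: l₂))
        = sync (Proc.act ms) (Proc.act (l₁ ++ (c, U) :: l₂)) := by
    intro x
    ext a
    simp only [sync, Finset.mem_filter]
    rw [menu_replace l₁ l₂ c x U]
  by_cases h : enablesOmega (Proc.act (l₁ ++ (c, U) :: l₂)) = true
  · rw [ResOmega _ _ h]
    have h2 : (L.map fun y => Cr y.1 * Res (Proc.act ms) (Proc.act (l₁ ++ (c, y.2) :: l₂)))
        = L.map fun y => Cr y.1 * 1 :=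
      List.map_congr_left fun y _ => by rw [ResOmega _ _ ((homega y.2).trans h)]
    rw [h2, Cr_sum_mul, hsum, Cr_one, one_mul]
  · have hmapstep : (L.map fun y => Cr y.1 * Res (Proc.act ms) (Proc.act (l₁ ++ (c, y.2) :: l₂)))
        = L.map fun y => ∑ a ∈ (sync (Proc.act ms) (Proc.act (l₁ ++ (c, U) :: l₂))).attach,
            Cr y.1 * ((Xv a.1 / ∑ b ∈ sync (Proc.act ms) (Proc.act (l₁ ++ (c, U) :: l₂)), Xv b)
              * Res (succD a.1 (Proc.act ms)) (succD (some a.1) (Proc.act (l₁ ++ (c, y.2) :: l₂)))) := by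
      refine List.map_congr_left fun y _ => ?_
      rw [Res.eq_3, if_neg (by rw [homega y.2]; exact h), hsync y.2, Finset.mul_sum]
    rw [Res.eq_3, if_neg h, hmapstep, list_finset_comm]
    refine Finset.sum_congr rfl fun a ha => ?_
    by_cases hac : c = (some a.1 : Option A)
    · have e1 : ∀ x : Proc (Option A),
          succD (some a.1) (Proc.act (l₁ ++ (c, x) :: l₂)) = x := by
        intro x
        rw [← hac]
        exact succD_replace_eq hcl₁ l₂ x
      have hwfa : WF (succD a.1 (Proc.act ms)) := WF_succD hms a.1
      have h2 : (L.map fun y => Cr y.1 * ((Xv a.1 / ∑ b ∈ sync (Proc.act ms) (Proc.act (l₁ ++ (c, U) :: l₂)), Xv b)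
            * Res (succD a.1 (Proc.act ms)) (succD (some a.1) (Proc.act (l₁ ++ (c, y.2) :: l₂)))))
          = L.map fun y => (Xv a.1 / ∑ b ∈ sync (Proc.act ms) (Proc.act (l₁ ++ (c, U) :: l₂)), Xv b)
            * (Cr y.1 * Res (succD a.1 (Proc.act ms)) y.2) := by
        refine List.map_congr_left fun y _ => ?_
        rw [e1 y.2]
        ring
      rw [h2, List.sum_map_mul_left, e1 U, hU _ hwfa]
    · have h2 : (L.map fun y => Cr y.1 * ((Xv a.1 / ∑ b ∈ sync (Proc.act ms) (Proc.act (l₁ ++ (c, U) :: l₂)), Xv b)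
            * Res (succD a.1 (Proc.act ms)) (succD (some a.1) (Proc.act (l₁ ++ (c, y.2) :: l₂)))))
          = L.map fun y => Cr y.1 * ((Xv a.1 / ∑ b ∈ sync (Proc.act ms) (Proc.act (l₁ ++ (c, U) :: l₂)), Xv b)
            * Res (succD a.1 (Proc.act ms)) (succD (some a.1) (Proc.act (l₁ ++ (c, U) :: l₂)))) := by
        refine List.map_congr_left fun y _ => ?_
        rw [succD_replace_ne hac l₁ l₂ y.2 U]
      rw [h2, Cr_sum_mul, hsum, Cr_one, one_mul]

lemma Res_replace (l₁ l₂ : List (Option A × Proc (Option A))) (c : Option A)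
    (U : Proc (Option A))
    (hnod : ((l₁ ++ (c, U) :: l₂).map Prod.fst).Nodup)
    (L : List (ℝ × Proc (Option A)))
    (hsum : (L.map Prod.fst).sum = 1)
    (hU : ∀ u : Proc A, WF u → Res u U = (L.map fun y => Cr y.1 * Res u y.2).sum)
    (s : Proc A) (hs : WF s) :
    Res s (Proc.act (l₁ ++ (c, U) :: l₂))
      = (L.map fun y => Cr y.1 * Res s (Proc.act (l₁ ++ (c, y.2) :: l₂))).sum := by
  cases s with
  | act ms => exact Res_replace_act l₁ l₂ c U hnod L hsum hU ms hs
  | prob ls =>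
    cases hs with
    | prob h1 hpos hle hact hwf =>
      rw [Res_prob_sum ls h1]
      have hstep : (ls.map fun x => Cr x.1 * Res x.2 (Proc.act (l₁ ++ (c, U) :: l₂)))
          = ls.map fun x => (L.map fun y =>
              Cr x.1 * (Cr y.1 * Res x.2 (Proc.act (l₁ ++ (c, y.2) :: l₂)))).sum := by
        refine List.map_congr_left fun x hx => ?_
        obtain ⟨l', hl'⟩ := hact x hx
        rw [hl', Res_replace_act l₁ l₂ c U hnod L hsum hU l' (hl' ▸ hwf x hx)]
        exact (List.sum_map_mul_left L
          (fun y => Cr y.1 * Res (Proc.act l') (Proc.act (l₁ ++ (c, y.2) :: l₂))) (Cr x.1)).symm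
      rw [hstep, list_sum_comm ls L
        (fun x y => Cr x.1 * (Cr y.1 * Res x.2 (Proc.act (l₁ ++ (c, y.2) :: l₂))))]
      refine congrArg List.sum (List.map_congr_left fun y _ => ?_)
      have h3 : (ls.map fun x => Cr x.1 * (Cr y.1 * Res x.2 (Proc.act (l₁ ++ (c, y.2) :: l₂))))
          = ls.map fun x => Cr y.1 * (Cr x.1 * Res x.2 (Proc.act (l₁ ++ (c, y.2) :: l₂))) :=
        List.map_congr_left fun x _ => by ring
      rw [h3, List.sum_map_mul_left, ← Res_prob_sum ls h1]

end Proc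
namespace Proc

variable {A : Type} [DecidableEq A]

lemma split_lemma : ∀ (n : ℕ) (T : Proc (Option A)), sizeOf T ≤ n → WF T → Tidy T →
    0 < probCount T →
    ∃ L : List (ℝ × Proc (Option A)),
      (L.map Prod.fst).sum = 1 ∧
      (∀ p ∈ L, WF p.2 ∧ Tidy p.2 ∧ probCount p.2 < probCount T) ∧
      ∀ s : Proc A, WF s → Res s T = (L.map fun y => Cr y.1 * Res s y.2).sum := by
  intro n
  induction n with
  | zero => intro T h; exact absurd h (by have := sizeOf_pos T; omega)
  | succ n ih =>
    intro T hT hW hTidy hpc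
    cases T with
    | prob l =>
      cases hW with
      | prob h1 hpos hle hact hwf =>
        cases hTidy with
        | prob htidy =>
          refine ⟨l, h1, ?_, fun s hs => Res_T_prob hs l⟩
          intro p hp
          refine ⟨hwf p hp, htidy p hp, ?_⟩
          rw [probCount_prob]
          have hmem : probCount p.2 ≤ (l.map fun q => probCount q.2).sum :=
            List.single_le_sum (fun x _ => Nat.zero_le x) _
              (List.mem_map.mpr ⟨p, hp, rfl⟩)
          omega
    | act l =>
      have hex : ∃ p ∈ l, 0 < probCount p.2 := by
        by_contra hno
        push_neg at hno
        have hz : probCount (Proc.act l) = 0 := by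
          rw [probCount_act]
          refine List.sum_eq_zero_iff.mpr ?_
          intro x hx
          rcases List.mem_map.mp hx with ⟨q, hq, rfl⟩
          have := hno q hq
          omega
        omega
      obtain ⟨p, hp, hppos⟩ := hex
      obtain ⟨l₁, l₂, hl⟩ := List.append_of_mem hp
      subst hl
      rcases p with ⟨c, U⟩
      cases hW with
      | act hdet hwfc =>
        cases hTidy with
        | act hnod htidyc =>
          have hmemU : ((c, U) : Option A × Proc (Option A)) ∈ l₁ ++ (c, U) :: l₂ := hp
          have hU_wf : WF U := hwfc (c, U) hmemU
          have hU_tidy : Tidy U := htidyc (c, U) hmemU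
          have hUsz : sizeOf U ≤ n := by
            have h' := sizeOf_snd_lt_act (l := l₁ ++ (c, U) :: l₂) hmemU
            have h'' : sizeOf ((c, U) : Option A × Proc (Option A)).2 = sizeOf U := rfl
            omega
          obtain ⟨L₀, hs0, hprops, hid⟩ := ih U hUsz hU_wf hU_tidy hppos
          have hpc_eq : ∀ x : Proc (Option A),
              probCount (Proc.act (l₁ ++ (c, x) :: l₂))
                = (l₁.map fun q => probCount q.2).sum
                  + (probCount x + (l₂.map fun q => probCount q.2).sum) := by
            intro x
            rw [probCount_act]
            simp [List.map_append, List.sum_append]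
          have hkeys_eq : ∀ x : Proc (Option A),
              ((l₁ ++ (c, x) :: l₂).map Prod.fst) = ((l₁ ++ (c, U) :: l₂).map Prod.fst) := by
            intro x
            rw [keys_replace, keys_replace]
          refine ⟨L₀.map fun y => (y.1, Proc.act (l₁ ++ (c, y.2) :: l₂)), ?_, ?_, ?_⟩
          · rw [List.map_map]
            exact hs0
          · rintro q hq
            rcases List.mem_map.mp hq with ⟨y, hy, rfl⟩
            obtain ⟨hwy, hty, hcy⟩ := hprops y hy
            have hchild : ∀ q' ∈ l₁ ++ (c, y.2) :: l₂, WF q'.2 ∧ Tidy q'.2 := by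
              intro q' hq'
              rcases List.mem_append.mp hq' with h' | h'
              · have : q' ∈ l₁ ++ (c, U) :: l₂ := List.mem_append_left _ h'
                exact ⟨hwfc q' this, htidyc q' this⟩
              · rcases List.mem_cons.mp h' with rfl | h''
                · exact ⟨hwy, hty⟩
                · have : q' ∈ l₁ ++ (c, U) :: l₂ :=
                    List.mem_append_right _ (List.mem_cons_of_mem _ h'')
                  exact ⟨hwfc q' this, htidyc q' this⟩
            refine ⟨WF.act (eq_of_nodup_keys (by rw [hkeys_eq y.2]; exact hnod))
                (fun q' hq' => (hchild q' hq').1),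
              Tidy.act (by rw [hkeys_eq y.2]; exact hnod) (fun q' hq' => (hchild q' hq').2), ?_⟩
            rw [hpc_eq y.2, hpc_eq U]
            omega
          · intro s hs
            rw [List.map_map]
            exact Res_replace l₁ l₂ c U hnod L₀ hs0 hid s hs

lemma main_lemma : ∀ (k : ℕ) (T : Proc (Option A)), probCount T ≤ k → WF T → Tidy T →
    ∀ s t : Proc A, WF s → WF t → Res s T ≠ Res t T →
    ∃ T' : Proc (Option A), WF T' ∧ NoProb T' ∧ Res s T' ≠ Res t T' := by
  intro k
  induction k with
  | zero =>
    intro T hk hW _ s t _ _ hne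
    exact ⟨T, hW, noProb_of_probCount_eq_zero T (Nat.le_zero.mp hk), hne⟩
  | succ k ih =>
    intro T hk hW hTidy s t hws hwt hne
    by_cases h0 : probCount T = 0
    · exact ⟨T, hW, noProb_of_probCount_eq_zero T h0, hne⟩
    · obtain ⟨L, hsum, hprops, hid⟩ :=
        split_lemma (sizeOf T) T le_rfl hW hTidy (Nat.pos_of_ne_zero h0)
      have hex : ∃ y ∈ L, Res s y.2 ≠ Res t y.2 := by
        by_contra hno
        push_neg at hno
        apply hne
        rw [hid s hws, hid t hwt]
        exact congrArg List.sum (List.map_congr_left fun y hy => by rw [hno y hy])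
      obtain ⟨y, hy, hyne⟩ := hex
      obtain ⟨hw, ht', hc⟩ := hprops y hy
      exact ih y.2 (by omega) hw ht' s t hws hwt hyne

end Proc

open Proc in
/-- Theorem 5 of the paper: `s ≉_T t` iff some test without
probabilistic transitions distinguishes `s` and `t`. -/
theorem stmt7 {A : Type} [Fintype A] [DecidableEq A] (s t : Proc A)
    (hs : WF s) (ht : WF t) :
    ¬ TestEquiv s t ↔
      ∃ T : Proc (Option A), WF T ∧ NoProb T ∧ Res s T ≠ Res t T := by
  constructor
  · intro h
    unfold TestEquiv at h
    push_neg at h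
    obtain ⟨T, hWT, hne⟩ := h
    obtain ⟨hWn, hTn⟩ := norm_wf_tidy (sizeOf T) T le_rfl hWT
    have hns : Res s (norm T) = Res s T := Res_norm (sizeOf s + sizeOf T) s T le_rfl
    have hnt : Res t (norm T) = Res t T := Res_norm (sizeOf t + sizeOf T) t T le_rfl
    exact main_lemma (probCount (norm T)) (norm T) le_rfl hWn hTn s t hs ht
      (by rw [hns, hnt]; exact hne)
  · rintro ⟨T, hWT, _, hne⟩ h
    exact hne (h T hWT)
end

section
/- Let s be a process of a probabilistic transition system over a finite action set 𝒜 and let M ⊆ 𝒜. Let T_M be the deterministic depth-one test Σ_{a ∉ M} a.ω, i.e., the test whose root offers exactly the actions in 𝒜 \ M and reaches a success (ω-enabled) state after each of them. Then R(s, T_M) = 1 − Σ_{M' ⊆ M} P_s^1(M'), where the sum ranges over all subsets M' of M. -/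
namespace Proc

/-- A state that immediately reports success (`ω`, encoded by `none`). -/
def omegaState (A : Type) : Proc (Option A) :=
  Proc.act [(none, Proc.act ([] : List (Option A × Proc (Option A))))]

/-- The deterministic depth-one test `Σ_{a ∉ M} a.ω`: its root offers exactly
the actions in `𝒜 \\ M`, each followed by a success state. -/
noncomputable def menuTest (A : Type) [Fintype A] [DecidableEq A] (M : Finset A) : Proc (Option A) :=
  Proc.act ((Finset.univ \ M).toList.map fun a => ((some a : Option A), omegaState A))

end Proc

set_option linter.unusedSectionVars false
namespace Proc
variable {A : Type} [Fintype A] [DecidableEq A]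

lemma Res_omegaState (s : Proc A) : Res s (omegaState A) = 1 := by
  cases s <;> · rw [omegaState, Res]; simp [enablesOmega]

lemma menuTest_not_omega (M : Finset A) : enablesOmega (menuTest A M) = false := by
  simp [menuTest, enablesOmega, omegaState]

lemma sync_menuTest (l : List (A × Proc A)) (M : Finset A) :
    sync (Proc.act l) (menuTest A M) = menu (Proc.act l) \ M := by
  ext a
  simp [sync, menuTest, menu, omegaState, Finset.mem_filter, List.mem_map, and_comm]

lemma succD_menuTest {a : A} {M : Finset A} (ha : a ∉ M) :
    succD (some a) (menuTest A M) = omegaState A := by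
  have hmem : a ∈ (Finset.univ \ M).toList := by simp [ha]
  have h : (((Finset.univ \ M).toList.map fun b => ((some b : Option A), omegaState A)).find?
      fun p => decide (p.1 = some a)).isSome := by
    rw [List.find?_isSome]
    exact ⟨(some a, omegaState A), List.mem_map.mpr ⟨a, hmem, rfl⟩, by simp⟩
  obtain ⟨c, hc⟩ := Option.isSome_iff_exists.mp h
  have hc2 := List.find?_some hc
  have hcmem := List.mem_of_find?_eq_some hc
  obtain ⟨b, _, rfl⟩ := List.mem_map.mp hcmem
  simp only [succD, getSucc, menuTest, hc, Option.map_some, Option.getD_some]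

noncomputable def CrHom (A : Type) : ℝ →+* RF A :=
  (algebraMap (MvPolynomial A ℝ) (RF A)).comp (MvPolynomial.C)

lemma Cr_eq (r : ℝ) : (Cr r : RF A) = CrHom A r := rfl

lemma sum_Xv_ne_zero {K : Finset A} (hK : K.Nonempty) : (∑ b ∈ K, Xv b : RF A) ≠ 0 := by
  have h1 : (∑ b ∈ K, Xv b : RF A)
      = algebraMap (MvPolynomial A ℝ) (RF A) (∑ b ∈ K, MvPolynomial.X b) := by
    simp [Xv, map_sum]
  rw [h1]
  intro h
  have h2 : (∑ b ∈ K, MvPolynomial.X b : MvPolynomial A ℝ) = 0 := by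
    apply IsFractionRing.injective (MvPolynomial A ℝ) (RF A)
    simpa using h
  have h3 := congrArg (MvPolynomial.eval fun _ => (1:ℝ)) h2
  simp [map_sum] at h3
  exact hK.ne_empty h3

lemma Res_act_menuTest (l : List (A × Proc A)) (M : Finset A) :
    Res (Proc.act l) (menuTest A M) =
      (∑ a ∈ sync (Proc.act l) (menuTest A M), Xv a) /
        ∑ b ∈ sync (Proc.act l) (menuTest A M), Xv b := by
  conv_lhs => rw [menuTest, Res]
  rw [← menuTest]
  rw [if_neg (by rw [menuTest_not_omega]; simp)]
  rw [Finset.sum_div, ← Finset.sum_attach (sync (Proc.act l) (menuTest A M))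
    (fun a => Xv a / ∑ b ∈ sync (Proc.act l) (menuTest A M), Xv b)]
  apply Finset.sum_congr rfl
  intro a _
  have haM : a.1 ∉ M := by
    have h2 : (a : A) ∈ menu (Proc.act l) \ M := by rw [← sync_menuTest]; exact a.2
    exact (Finset.mem_sdiff.mp h2).2
  rw [succD_menuTest haM, Res_omegaState, mul_one]

lemma sum_P1_act (l : List (A × Proc A)) (M : Finset A) :
    ∑ M' ∈ M.powerset, P1 M' (Proc.act l) = if menu (Proc.act l) ⊆ M then 1 else 0 := by
  have : ∀ M', P1 M' (Proc.act l) = if (l.map Prod.fst).toFinset = M' then (1:ℝ) else 0 :=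
    fun M' => by rw [P1]
  simp only [this]
  rw [Finset.sum_ite_eq]
  simp [menu]; congr

lemma list_sum_finset_sum {β γ : Type} (L : List β) (s : Finset γ) (f : γ → β → ℝ) :
    ∑ c ∈ s, (L.map (f c)).sum = (L.map fun b => ∑ c ∈ s, f c b).sum := by
  induction L with
  | nil => simp
  | cons x xs ih => simp [Finset.sum_add_distrib, ih]

lemma list_sum_map_sub {β : Type} (L : List β) (f g : β → ℝ) :
    (L.map fun b => f b - g b).sum = (L.map f).sum - (L.map g).sum := by
  induction L with
  | nil => simp
  | cons x xs ih => simp [ih]; ring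

lemma attach_map_fst (l : List (ℝ × Proc A)) :
    (l.attach.map fun x => x.1.1).sum = (l.map Prod.fst).sum := by
  rw [List.attach_map_val]

theorem stmt9_aux (M : Finset A) :
    ∀ s : Proc A, WF s → Res s (menuTest A M) = 1 - Cr (∑ M' ∈ M.powerset, P1 M' s)
  | Proc.act l, _ => by
      rw [Res_act_menuTest, sum_P1_act]
      by_cases hM : menu (Proc.act l) ⊆ M
      · rw [if_pos hM]
        have he : sync (Proc.act l) (menuTest A M) = ∅ := by
          rw [sync_menuTest]; exact Finset.sdiff_eq_empty_iff_subset.mpr hM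
        simp [he, Cr_eq]
      · rw [if_neg hM]
        have hne : (sync (Proc.act l) (menuTest A M)).Nonempty := by
          rw [sync_menuTest]
          obtain ⟨a, ha, haM⟩ := Finset.not_subset.mp hM
          exact ⟨a, Finset.mem_sdiff.mpr ⟨ha, haM⟩⟩
        rw [div_self (sum_Xv_ne_zero hne)]
        simp [Cr_eq]
  | Proc.prob l, WF.prob hsum hpos hle hact hwf => by
      rw [Res, if_neg (by rw [menuTest_not_omega]; simp)]
      have hrw : (l.attach.map fun x => Cr x.1.1 * Res x.1.2 (menuTest A M))
          = (l.attach.map fun x => CrHom A (x.1.1 * (1 - ∑ M' ∈ M.powerset, P1 M' x.1.2))) := by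
        apply List.map_congr_left
        intro x _
        rw [stmt9_aux M x.1.2 (hwf x.1 x.2), Cr_eq, Cr_eq, map_mul, map_sub, map_one]
      rw [hrw]
      have hrw2 : (l.attach.map fun x => CrHom A (x.1.1 * (1 - ∑ M' ∈ M.powerset, P1 M' x.1.2)))
          = (l.attach.map fun x => x.1.1 * (1 - ∑ M' ∈ M.powerset, P1 M' x.1.2)).map (CrHom A) := by
        rw [List.map_map]; rfl
      rw [hrw2, ← map_list_sum (CrHom A), Cr_eq,
        show (1:RF A) = CrHom A 1 from (map_one _).symm, ← map_sub]
      congr 1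
      have hP1 : ∀ M', P1 M' (Proc.prob l) = (l.attach.map fun x => x.1.1 * P1 M' x.1.2).sum :=
        fun M' => by rw [P1]
      simp only [hP1]
      rw [list_sum_finset_sum]
      have : (l.attach.map fun x => x.1.1 * (1 - ∑ M' ∈ M.powerset, P1 M' x.1.2))
          = (l.attach.map fun x =>
              x.1.1 - ∑ M' ∈ M.powerset, x.1.1 * P1 M' x.1.2) := by
        apply List.map_congr_left
        intro x _
        rw [mul_sub, mul_one, Finset.mul_sum]
      rw [this, list_sum_map_sub (l.attach) (fun x => x.1.1)
        (fun x => ∑ M' ∈ M.powerset, x.1.1 * P1 M' x.1.2), attach_map_fst, hsum]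
termination_by s => sizeOf s
decreasing_by
  rcases x with ⟨⟨r, s⟩, hx⟩
  have h := List.sizeOf_lt_of_mem hx
  simp only [Prod.mk.sizeOf_spec, Proc.prob.sizeOf_spec] at h ⊢
  omega

end Proc

open Proc in
/-- for the deterministic depth-one test `T_M = Σ_{a ∉ M} a.ω`,
we have `R(s, T_M) = 1 − Σ_{M' ⊆ M} P_s^1(M')`. -/
theorem stmt9 {A : Type} [Fintype A] [DecidableEq A] (s : Proc A)
    (hs : WF s) (M : Finset A) :
    Res s (menuTest A M) = 1 - Cr (∑ M' ∈ M.powerset, P1 M' s) := by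
  exact stmt9_aux M s hs
end
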